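/- If R is a 2-torsion free semiprime ring with involution * and f : R → R is an additive map such that [f(x), x*] lies in the center Z(R) for all x in R, then [f(x), x*] = 0 for all x in R. -/

import Mathlib

/-!
Replacing `f` by `f ∘ s` turns the hypothesis into `[g y, y]` central for the additive map
`g = f ∘ s`, so it suffices to show that an additive centralizing map `g` of a 2-torsion free
semiprime ring is commuting. Linearizing makes `[g a, b] + [g b, a]` central for all `a, b`;
for `c = [g x, x]` this yields `[[g (x²), x], g x] = 2c²` and `[[g (x²), g x], x] = 0`, and the
Jacobi identity then forces `2c² = 0`. So the central element `c` has `c r c = r c² = 0` for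
every `r`, and semiprimeness gives `c = 0`.
-/

attribute [local instance] LieRing.ofAssociativeRing

section

variable {R : Type*} [Ring R]

theorem lie_eq_zero_of_mem_center {c : R} (hc : c ∈ Set.center R) (y : R) : ⁅c, y⁆ = 0 := by
  rw [Ring.lie_def, ← Semigroup.mem_center_iff.mp hc y, sub_self]

theorem mul_lie_of_mem_center {c : R} (hc : c ∈ Set.center R) (y z : R) :
    ⁅c * y, z⁆ = c * ⁅y, z⁆ := by
  have hz := Semigroup.mem_center_iff.mp hc z
  simp only [Ring.lie_def, mul_sub, ← mul_assoc, hz]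

theorem lie_mul_self_of_lie_mem_center {a x : R} (h : ⁅a, x⁆ ∈ Set.center R) :
    ⁅a, x * x⁆ = (⁅a, x⁆ + ⁅a, x⁆) * x := by
  have hx := Semigroup.mem_center_iff.mp h x
  simp only [Ring.lie_def] at hx ⊢
  linear_combination (norm := noncomm_ring) hx

theorem eq_zero_of_mem_center_of_mul_self_eq_zero
    (hsemiprime : ∀ a : R, (∀ x : R, a * x * a = 0) → a = 0)
    {c : R} (hc : c ∈ Set.center R) (h : c * c = 0) : c = 0 :=
  hsemiprime c fun y => by rw [← Semigroup.mem_center_iff.mp hc y, mul_assoc, h, mul_zero]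

variable {g : R → R} (hadd : ∀ x y : R, g (x + y) = g x + g y)
  (hcent : ∀ x : R, ⁅g x, x⁆ ∈ Set.center R)
include hadd hcent

theorem lie_add_lie_mem_center (a b : R) : ⁅g a, b⁆ + ⁅g b, a⁆ ∈ Set.center R := by
  show _ ∈ Subring.center R
  have h : ⁅g (a + b), a + b⁆ - ⁅g a, a⁆ - ⁅g b, b⁆ ∈ Subring.center R :=
    sub_mem (sub_mem (hcent (a + b)) (hcent a)) (hcent b)
  convert h using 2
  rw [hadd, lie_add, add_lie, add_lie]
  abel

theorem lie_apply_mul_self_add_self_eq_zero (x : R) :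
    ⁅g x, x⁆ * ⁅g x, x⁆ + ⁅g x, x⁆ * ⁅g x, x⁆ = 0 := by
  set c := ⁅g x, x⁆ with hc_def
  have hc : c ∈ Set.center R := hcent x
  have hd : ⁅g (g x), x⁆ ∈ Set.center R := by
    simpa only [lie_self, zero_add] using lie_add_lie_mem_center hadd hcent x (g x)
  have h₁ : ⁅⁅g (x * x), x⁆, g x⁆ = c * c + c * c := by
    have h := lie_eq_zero_of_mem_center (lie_add_lie_mem_center hadd hcent x (x * x)) (g x)
    rw [lie_mul_self_of_lie_mem_center hc, add_lie,
      mul_lie_of_mem_center (Set.add_mem_center hc hc), ← lie_skew, ← hc_def] at h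
    linear_combination (norm := noncomm_ring) h
  have h₂ : ⁅⁅g (x * x), g x⁆, x⁆ = 0 := by
    have h := lie_eq_zero_of_mem_center (lie_add_lie_mem_center hadd hcent (g x) (x * x)) x
    rwa [lie_mul_self_of_lie_mem_center hd, add_lie,
      mul_lie_of_mem_center (Set.add_mem_center hd hd), lie_self, mul_zero, zero_add] at h
  calc c * c + c * c = ⁅⁅g (x * x), x⁆, g x⁆ := h₁.symm
    _ = ⁅g (x * x), ⁅x, g x⁆⁆ - ⁅x, ⁅g (x * x), g x⁆⁆ := lie_lie _ _ _
    _ = 0 := by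
      rw [← lie_skew x (g x), ← hc_def, ← lie_skew x, h₂, lie_neg, ← lie_skew (g (x * x)) c,
        lie_eq_zero_of_mem_center hc]
      simp

theorem lie_apply_self_eq_zero_of_mem_center
    (hsemiprime : ∀ a : R, (∀ x : R, a * x * a = 0) → a = 0)
    (htorsion : ∀ x : R, x + x = 0 → x = 0) (x : R) : ⁅g x, x⁆ = 0 :=
  eq_zero_of_mem_center_of_mul_self_eq_zero hsemiprime (hcent x)
    (htorsion _ (lie_apply_mul_self_add_self_eq_zero hadd hcent x))

end

theorem star_centralizing_additive_map_is_star_commuting_general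
    {R : Type*} [Ring R]
    (hsemiprime : ∀ a : R, (∀ x : R, a * x * a = 0) → a = 0)
    (htorsion : ∀ x : R, x + x = 0 → x = 0)
    (s : R → R)
    (hsadd : ∀ x y : R, s (x + y) = s x + s y)
    (hsinv : ∀ x : R, s (s x) = x)
    (f : R → R) (hadd : ∀ x y : R, f (x + y) = f x + f y)
    (hcent : ∀ x : R, f x * s x - s x * f x ∈ Set.center R) :
    ∀ x : R, f x * s x - s x * f x = 0 := by
  intro x
  have hcomm := lie_apply_self_eq_zero_of_mem_center (g := f ∘ s)
    (fun a b => by simp only [Function.comp, hsadd, hadd])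
    (fun y => by simpa only [Function.comp, hsinv, Ring.lie_def] using hcent (s y))
    hsemiprime htorsion (s x)
  simpa only [Function.comp, hsinv, Ring.lie_def] using hcomm

/-- If `R` is a 2-torsion free semiprime ring with involution `s` and `f : R → R`
is additive with `[f x, s x]` central for all `x`, then `[f x, s x] = 0`. -/
theorem star_centralizing_additive_map_is_star_commuting
    {R : Type*} [Ring R]
    (hsemiprime : ∀ a : R, (∀ x : R, a * x * a = 0) → a = 0)
    (htorsion : ∀ x : R, x + x = 0 → x = 0)
    (s : R → R)
    (hsadd : ∀ x y : R, s (x + y) = s x + s y)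
    (hsmul : ∀ x y : R, s (x * y) = s y * s x)
    (hsinv : ∀ x : R, s (s x) = x)
    (f : R → R) (hadd : ∀ x y : R, f (x + y) = f x + f y)
    (hcent : ∀ x : R, f x * s x - s x * f x ∈ Set.center R) :
    ∀ x : R, f x * s x - s x * f x = 0 :=
  star_centralizing_additive_map_is_star_commuting_general hsemiprime htorsion s hsadd hsinv f hadd
    hcent
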